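/- Let d ≥ 1 and A ≥ 2 be integers, set D = d·A, and let μ > 0, f ∈ (0,1), p ∈ (0,1) be reals. Define for ν ∈ (0,1): N_joint(ν) = (μ/ν^D)·log(μ/(ν^D(1−p))) and N_fact(ν) = ((1−f)μ/ν^D)·log((1−f)μ/(ν^D(1−p))) + ((fμ)^{1/A}/ν^d)·log((fμ)^{1/A}/(ν^d(1−p^{1/A}))). Then the sample complexity gain 1 − N_fact(ν)/N_joint(ν) tends to f as ν → 0⁺. -/
import Mathlib


open Filter

private lemma auxA (c b : ℝ) : Tendsto (fun x : ℝ => (c + x) / (b + x)) atTop (nhds 1) := by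
  have h0 : Tendsto (fun x : ℝ => (c - b) / (b + x)) atTop (nhds 0) :=
    Tendsto.div_atTop tendsto_const_nhds (tendsto_atTop_add_const_left _ b tendsto_id)
  have h1 : Tendsto (fun x : ℝ => 1 + (c - b) / (b + x)) atTop (nhds 1) := by
    simpa using h0.const_add 1
  apply h1.congr'
  filter_upwards [eventually_gt_atTop (-b)] with x hx
  have hbx : b + x ≠ 0 := by linarith
  field_simp
  ring

/-- The sample complexity gain `1 - N_fact(ν)/N_joint(ν)` of `FactPRM*` over `PRM*`
tends to the factorization factor `f` as the required dispersion `ν → 0⁺`. Here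
`D = d·A` is the joint dimension, the non-factorizable region (measure `(1-f)μ`,
dimension `D`) is searched jointly, and `A` single-agent regions (each of measure
`(fμ)^{1/A}`, dimension `d`) are searched at strengthened probability `p^{1/A}`. -/
theorem stmt_10 (d A : ℕ) (hd : 1 ≤ d) (hA : 2 ≤ A) (μ f p : ℝ)
    (hμ : 0 < μ) (hf : f ∈ Set.Ioo (0 : ℝ) 1) (hp : p ∈ Set.Ioo (0 : ℝ) 1) :
    Tendsto
      (fun ν : ℝ =>
        1 - ((1 - f) * μ / ν ^ (d * A) *
                Real.log ((1 - f) * μ / (ν ^ (d * A) * (1 - p)))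
              + (f * μ) ^ ((1 : ℝ) / A) / ν ^ d *
                Real.log ((f * μ) ^ ((1 : ℝ) / A) / (ν ^ d * (1 - p ^ ((1 : ℝ) / A)))))
            / (μ / ν ^ (d * A) * Real.log (μ / (ν ^ (d * A) * (1 - p)))))
      (nhdsWithin 0 (Set.Ioi 0)) (nhds f) := by
  obtain ⟨hf0, hf1⟩ := hf
  obtain ⟨hp0, hp1⟩ := hp
  have h1f : (0:ℝ) < 1 - f := by linarith
  have h1p : (0:ℝ) < 1 - p := by linarith
  have hq1 : p ^ ((1:ℝ)/A) < 1 :=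
    Real.rpow_lt_one hp0.le hp1 (by positivity)
  have hq0 : (0:ℝ) < p ^ ((1:ℝ)/A) := Real.rpow_pos_of_pos hp0 _
  have h1q : (0:ℝ) < 1 - p ^ ((1:ℝ)/A) := by linarith
  have hK : (0:ℝ) < (f*μ) ^ ((1:ℝ)/A) := Real.rpow_pos_of_pos (by positivity) _
  set K : ℝ := (f*μ) ^ ((1:ℝ)/A) with hKdef
  set e : ℕ := d * A - d with hedef
  have hde : d + e = d * A := by
    have : d ≤ d * A := Nat.le_mul_of_pos_right d (by omega)
    omega
  have he0 : 0 < e := by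
    have : d * 2 ≤ d * A := Nat.mul_le_mul_left d hA
    omega
  set c1 : ℝ := Real.log ((1-f)*μ/(1-p)) with hc1
  set c2 : ℝ := Real.log (μ/(1-p)) with hc2
  set c3 : ℝ := Real.log (K/(1 - p ^ ((1:ℝ)/A))) with hc3
  set DA : ℝ := ((d * A : ℕ) : ℝ) with hDA
  have hDA0 : (0:ℝ) < DA := by
    have h : 0 < d * A := by positivity
    rw [hDA]
    exact_mod_cast h
  have hd0 : (0:ℝ) < (d:ℝ) := by exact_mod_cast hd
  -- the model function of x = -log ν
  have hmul : Tendsto (fun x : ℝ => DA * x) atTop atTop :=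
    Tendsto.const_mul_atTop hDA0 tendsto_id
  have hr1 : Tendsto (fun x : ℝ => (c1 + DA * x)/(c2 + DA * x)) atTop (nhds 1) :=
    (auxA c1 c2).comp hmul
  have hr2 : Tendsto (fun x : ℝ => (c3 + (d:ℝ) * x)/(c2 + DA * x)) atTop
      (nhds ((d:ℝ)/DA)) := by
    have h := ((auxA (c3 * DA / d) c2).comp hmul).const_mul ((d:ℝ)/DA)
    rw [mul_one] at h
    apply h.congr
    intro x
    have hDAne : DA ≠ 0 := hDA0.ne'
    have hdne : (d:ℝ) ≠ 0 := hd0.ne'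
    simp only [Function.comp]
    by_cases h0 : c2 + DA * x = 0
    · rw [h0]
      simp
    · field_simp
  have hexp : Tendsto (fun x : ℝ => Real.exp (-(e:ℝ) * x)) atTop (nhds 0) := by
    apply Real.tendsto_exp_atBot.comp
    have he0' : (0:ℝ) < (e:ℝ) := by exact_mod_cast he0
    have h2 : Tendsto (fun x : ℝ => (e:ℝ) * -x) atTop atBot :=
      Tendsto.const_mul_atBot he0' tendsto_neg_atTop_atBot
    exact h2.congr fun x => by ring
  have hG : Tendsto (fun x : ℝ =>
      1 - ((1-f) * ((c1 + DA * x)/(c2 + DA * x))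
        + K / μ * Real.exp (-(e:ℝ) * x) * ((c3 + (d:ℝ) * x)/(c2 + DA * x))))
      atTop (nhds f) := by
    have hsum : Tendsto (fun x : ℝ =>
        (1-f) * ((c1 + DA * x)/(c2 + DA * x))
        + K / μ * Real.exp (-(e:ℝ) * x) * ((c3 + (d:ℝ) * x)/(c2 + DA * x)))
        atTop (nhds ((1-f) * 1 + K / μ * 0 * ((d:ℝ)/DA))) :=
      (hr1.const_mul _).add (((hexp.const_mul _).mul hr2))
    have := hsum.const_sub 1
    convert this using 2
    ring
  -- x(ν) = -log ν tends to atTop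
  have hx : Tendsto (fun ν : ℝ => -Real.log ν) (nhdsWithin 0 (Set.Ioi 0)) atTop := by
    have := Real.tendsto_log_nhdsGT_zero
    exact tendsto_neg_atBot_atTop.comp this
  have key := hG.comp hx
  apply key.congr'
  have hLpos : ∀ᶠ ν in nhdsWithin 0 (Set.Ioi 0),
      0 < c2 + DA * (-Real.log ν) := by
    have : Tendsto (fun ν : ℝ => c2 + DA * (-Real.log ν)) (nhdsWithin 0 (Set.Ioi 0)) atTop :=
      tendsto_atTop_add_const_left _ c2 (hmul.comp hx)
    exact this.eventually_gt_atTop 0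
  filter_upwards [self_mem_nhdsWithin, hLpos] with ν hν hL
  rw [Set.mem_Ioi] at hν
  have hνd : (0:ℝ) < ν ^ d := by positivity
  have hνDA : (0:ℝ) < ν ^ (d * A) := by positivity
  set x : ℝ := -Real.log ν with hxdef
  have hL1 : Real.log ((1-f)*μ/(ν ^ (d*A) * (1-p))) = c1 + DA * x := by
    rw [Real.log_div (by positivity) (by positivity), Real.log_mul hνDA.ne' h1p.ne',
      Real.log_pow, hc1, Real.log_div (by positivity) h1p.ne', hDA, hxdef]
    ring
  have hL2 : Real.log (K/(ν ^ d * (1 - p ^ ((1:ℝ)/A)))) = c3 + (d:ℝ) * x := by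
    rw [Real.log_div hK.ne' (by positivity), Real.log_mul hνd.ne' h1q.ne',
      Real.log_pow, hc3, Real.log_div hK.ne' h1q.ne', hxdef]
    ring
  have hL3 : Real.log (μ/(ν ^ (d*A) * (1-p))) = c2 + DA * x := by
    rw [Real.log_div hμ.ne' (by positivity), Real.log_mul hνDA.ne' h1p.ne',
      Real.log_pow, hc2, Real.log_div hμ.ne' h1p.ne', hDA, hxdef]
    ring
  have hexpx : Real.exp (-(e:ℝ) * x) = ν ^ e := by
    rw [hxdef]
    have : -(e:ℝ) * -Real.log ν = (e:ℝ) * Real.log ν := by ring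
    rw [this, Real.exp_nat_mul, Real.exp_log hν]
  simp only [Function.comp]
  rw [hexpx, ← hL1, ← hL2, ← hL3]
  set L1 := Real.log ((1-f)*μ/(ν ^ (d*A) * (1-p))) with hL1'
  set L2 := Real.log (K/(ν ^ d * (1 - p ^ ((1:ℝ)/A)))) with hL2'
  set L3 := Real.log (μ/(ν ^ (d*A) * (1-p))) with hL3'
  have hL3pos : 0 < L3 := by rw [hL3]; exact hL
  have hL3ne : L3 ≠ 0 := hL3pos.ne'
  have hpow : ν ^ (d * A) = ν ^ d * ν ^ e := by rw [← pow_add, hde]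
  congr 1
  rw [hpow]
  field_simp
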